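/- arXiv:2105.07678 — 4 statements merged into one kernel-verified Lean document; each statement's English description precedes it below -/
import Mathlib

section
/- If Φ : ℝ₊ → ℝ^{n×n} satisfies the matrix differential equation dΦ/dt = A(t)Φ(t), Φ(0) = I, with t ↦ A(t) continuous, then for any k ∈ {1,…,n} the k-th multiplicative compound satisfies d/dt (Φ(t))^{(k)} = (A(t))^{[k]} (Φ(t))^{(k)}. -/
open Matrix

/-- The `k`-th multiplicative compound of a matrix. -/
noncomputable def mulCompound {R : Type*} [CommRing R] {n m : ℕ} (k : ℕ)
    (A : Matrix (Fin n) (Fin m) R) :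
    Matrix {s : Finset (Fin n) // s.card = k} {s : Finset (Fin m) // s.card = k} R :=
  fun α β => (A.submatrix (α.1.orderEmbOfFin α.2) (β.1.orderEmbOfFin β.2)).det

/-- The `k`-th additive compound: `A^{[k]} := (d/dt)(exp(At))^{(k)} |_{t=0}`. -/
noncomputable def addCompound {n : ℕ} (k : ℕ) (A : Matrix (Fin n) (Fin n) ℝ) :
    Matrix {s : Finset (Fin n) // s.card = k} {s : Finset (Fin n) // s.card = k} ℝ :=
  fun α β => deriv (fun t : ℝ => mulCompound k (NormedSpace.exp (t • A)) α β) 0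

/-! The map `M ↦ M^{(k)}` is polynomial in the entries, so by the chain rule the derivative of
`Φ(t)^{(k)}` depends only on `Φ(t)` and `Φ'(t) = A(t) Φ(t)`. The curve `u ↦ exp(u A(t)) Φ(t)` has
the same position and velocity at `u = 0`, and by Cauchy–Binet its compound is
`exp(u A(t))^{(k)} Φ(t)^{(k)}`, whose derivative at `0` is `A(t)^{[k]} Φ(t)^{(k)}` by the definition
of the additive compound. -/

open Finset NormedSpace

theorem Finset.sum_filter_injective_eq_sum_orderEmbOfFin_comp {ι M : Type*} [Fintype ι]
    [LinearOrder ι] [AddCommMonoid M] {k : ℕ} (g : (Fin k → ι) → M) :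
    ∑ f ∈ univ.filter Function.Injective, g f =
      ∑ γ : {s : Finset ι // s.card = k}, ∑ σ : Equiv.Perm (Fin k),
        g (γ.1.orderEmbOfFin γ.2 ∘ σ) := by
  rw [← Fintype.sum_prod_type']
  symm
  refine Finset.sum_bij (fun p _ => p.1.1.orderEmbOfFin p.1.2 ∘ p.2) ?_ ?_ ?_ (fun _ _ => rfl)
  · rintro ⟨γ, σ⟩ -
    simpa using (γ.1.orderEmbOfFin γ.2).injective.comp σ.injective
  · rintro ⟨⟨s, hs⟩, σ⟩ - ⟨⟨s', hs'⟩, σ'⟩ - h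
    have hss' : s = s' := by
      simpa [← Finset.image_image, Finset.image_univ_equiv] using congrArg (univ.image ·) h
    subst hss'
    simp only [Prod.mk.injEq, true_and]
    exact Equiv.ext fun i => (s.orderEmbOfFin hs).injective (congrFun h i)
  · intro f hf
    have hf : Function.Injective f := (mem_filter.mp hf).2
    have hs : (univ.image f).card = k := by rw [card_image_of_injective _ hf, card_fin]
    refine ⟨(⟨_, hs⟩, (Tuple.sort f).symm), mem_univ _, ?_⟩
    have hsorted : f ∘ Tuple.sort f = (univ.image f).orderEmbOfFin hs :=
      orderEmbOfFin_unique hs (fun i => mem_image_of_mem f (mem_univ _))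
        ((Tuple.monotone_sort f).strictMono_of_injective (hf.comp (Tuple.sort f).injective))
    simp [← hsorted, Function.comp_assoc]

namespace Matrix

variable {R : Type*} [CommRing R] {m ι : Type*} [Fintype m] [DecidableEq m]

theorem det_mul_eq_sum_prod_mul_det_submatrix [Fintype ι] (P : Matrix m ι R)
    (Q : Matrix ι m R) :
    (P * Q).det = ∑ f : m → ι, (∏ i, P i (f i)) * (Q.submatrix f id).det := by
  rw [← det_transpose (P * Q), det_apply']
  simp only [transpose_apply, mul_apply, prod_univ_sum, Fintype.piFinset_univ, Finset.mul_sum,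
    prod_mul_distrib]
  rw [Finset.sum_comm]
  refine Finset.sum_congr rfl fun f _ => ?_
  rw [← det_transpose (Q.submatrix f id), det_apply', Finset.mul_sum]
  refine Finset.sum_congr rfl fun σ _ => ?_
  simp only [transpose_apply, submatrix_apply, id]
  ring

theorem det_submatrix_eq_zero_of_not_injective {f : m → ι} (hf : ¬Function.Injective f)
    (Q : Matrix ι m R) :
    (Q.submatrix f id).det = 0 := by
  obtain ⟨i, j, hij, hne⟩ := Function.not_injective_iff.mp hf
  exact det_zero_of_row_eq hne (by ext; simp [hij])

theorem det_mul_eq_sum_det_submatrix_mul_det_submatrix [Fintype ι] [LinearOrder ι] {k : ℕ}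
    (P : Matrix (Fin k) ι R) (Q : Matrix ι (Fin k) R) :
    (P * Q).det = ∑ γ : {s : Finset ι // s.card = k},
      (P.submatrix id (γ.1.orderEmbOfFin γ.2)).det *
        (Q.submatrix (γ.1.orderEmbOfFin γ.2) id).det := by
  have hperm (e : Fin k → ι) :
      ∑ σ : Equiv.Perm (Fin k), (∏ i, P i (e (σ i))) * (Q.submatrix (e ∘ σ) id).det =
        (P.submatrix id e).det * (Q.submatrix e id).det := by
    rw [← det_transpose (P.submatrix id e), det_apply', Finset.sum_mul]
    refine Finset.sum_congr rfl fun σ _ => ?_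
    rw [show Q.submatrix (e ∘ σ) id = (Q.submatrix e id).submatrix σ id from rfl, det_permute]
    simp only [transpose_apply, submatrix_apply, id]
    ring
  rw [det_mul_eq_sum_prod_mul_det_submatrix,
    ← sum_filter_of_ne (p := Function.Injective) fun f _ hf => ?_,
    sum_filter_injective_eq_sum_orderEmbOfFin_comp]
  · exact Finset.sum_congr rfl fun γ _ => hperm _
  · by_contra hinj
    exact hf (by rw [det_submatrix_eq_zero_of_not_injective hinj, mul_zero])

end Matrix

theorem mulCompound_mul {R : Type*} [CommRing R] {n m p : ℕ} (k : ℕ)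
    (P : Matrix (Fin n) (Fin m) R) (Q : Matrix (Fin m) (Fin p) R) :
    mulCompound k (P * Q) = mulCompound k P * mulCompound k Q := by
  ext α β
  rw [mulCompound, submatrix_mul P Q _ id _ Function.bijective_id,
    det_mul_eq_sum_det_submatrix_mul_det_submatrix]
  rfl

-- Matrices carry no global norm. Derivatives only see the topology, which the operator norm used
-- here for `exp` and the sup norm used below for the chain rule share.
section
attribute [local instance] Matrix.linftyOpNormedRing Matrix.linftyOpNormedAlgebra

theorem hasDerivAt_exp_smul_mul {n : ℕ} (B M : Matrix (Fin n) (Fin n) ℝ) :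
    HasDerivAt (fun u : ℝ => exp (u • B) * M) (B * M) 0 := by
  have h := (hasDerivAt_exp_smul_const' (𝕂 := ℝ) B 0).mul_const M
  rwa [zero_smul, exp_zero, mul_one] at h

end

section
attribute [local instance] Matrix.normedAddCommGroup Matrix.normedSpace

variable {n k : ℕ}

theorem differentiable_mulCompound_apply {m : ℕ} (α : {s : Finset (Fin n) // s.card = k})
    (β : {s : Finset (Fin m) // s.card = k}) :
    Differentiable ℝ fun M : Matrix (Fin n) (Fin m) ℝ => mulCompound k M α β := by
  simp only [mulCompound, det_apply, submatrix_apply]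
  fun_prop

theorem hasDerivAt_mulCompound_exp_smul (B : Matrix (Fin n) (Fin n) ℝ)
    (α β : {s : Finset (Fin n) // s.card = k}) :
    HasDerivAt (fun u : ℝ => mulCompound k (exp (u • B)) α β) (addCompound k B α β) 0 := by
  have hexp : HasDerivAt (fun u : ℝ => exp (u • B)) B 0 := by
    simpa using hasDerivAt_exp_smul_mul B 1
  exact ((differentiable_mulCompound_apply α β _).hasFDerivAt.comp_hasDerivAt 0
    hexp).differentiableAt.hasDerivAt

theorem hasDerivWithinAt_mulCompound_apply {M : ℝ → Matrix (Fin n) (Fin n) ℝ}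
    {B : Matrix (Fin n) (Fin n) ℝ} {s : Set ℝ} {t : ℝ}
    (hM : ∀ i j, HasDerivWithinAt (fun u => M u i j) ((B * M t) i j) s t)
    (α β : {s : Finset (Fin n) // s.card = k}) :
    HasDerivWithinAt (fun u => mulCompound k (M u) α β)
      ((addCompound k B * mulCompound k (M t)) α β) s t := by
  have hc := (differentiable_mulCompound_apply α β (M t)).hasFDerivAt
  have hvia_fderiv : HasDerivAt (fun u : ℝ => mulCompound k (exp (u • B) * M t) α β)
      (fderiv ℝ (fun N => mulCompound k N α β) (M t) (B * M t)) 0 :=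
    hc.comp_hasDerivAt_of_eq 0 (hasDerivAt_exp_smul_mul B (M t)) (by simp)
  have hvia_cauchyBinet : HasDerivAt (fun u : ℝ => mulCompound k (exp (u • B) * M t) α β)
      ((addCompound k B * mulCompound k (M t)) α β) 0 := by
    simp only [mulCompound_mul, mul_apply]
    exact HasDerivAt.fun_sum fun γ _ => (hasDerivAt_mulCompound_exp_smul B α γ).mul_const _
  rw [← hvia_fderiv.unique hvia_cauchyBinet]
  exact hc.comp_hasDerivWithinAt t
    (hasDerivWithinAt_pi.2 fun i => hasDerivWithinAt_pi.2 fun j => hM i j)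

end

theorem mulCompound_ode_general {n : ℕ} (k : ℕ)
    (A Φ : ℝ → Matrix (Fin n) (Fin n) ℝ)
    (hΦ : ∀ i j, ∀ t ∈ Set.Ici (0:ℝ),
      HasDerivWithinAt (fun s => Φ s i j) ((A t * Φ t) i j) (Set.Ici 0) t) :
    ∀ α β, ∀ t ∈ Set.Ici (0:ℝ),
      HasDerivWithinAt (fun s => mulCompound k (Φ s) α β)
        ((addCompound k (A t) * mulCompound k (Φ t)) α β) (Set.Ici 0) t :=
  fun α β t ht => hasDerivWithinAt_mulCompound_apply (fun i j => hΦ i j t ht) α β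

/-- If `Φ : ℝ₊ → ℝ^{n×n}` solves `Φ' = A(t) Φ(t)`, `Φ(0) = I`, with `A` continuous,
then `(Φ(t))^{(k)}` solves `d/dt (Φ(t))^{(k)} = (A(t))^{[k]} (Φ(t))^{(k)}`. -/
theorem mulCompound_ode {n : ℕ} (k : ℕ) (hk : 1 ≤ k) (hkn : k ≤ n)
    (A Φ : ℝ → Matrix (Fin n) (Fin n) ℝ)
    (hA : ∀ i j, Continuous fun t => A t i j)
    (hΦ0 : Φ 0 = 1)
    (hΦ : ∀ i j, ∀ t ∈ Set.Ici (0:ℝ),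
      HasDerivWithinAt (fun s => Φ s i j) ((A t * Φ t) i j) (Set.Ici 0) t) :
    ∀ α β, ∀ t ∈ Set.Ici (0:ℝ),
      HasDerivWithinAt (fun s => mulCompound k (Φ s) α β)
        ((addCompound k (A t) * mulCompound k (Φ t)) α β) (Set.Ici 0) t :=
  mulCompound_ode_general k A Φ hΦ
end

section
/- Let A ∈ ℝ^{n×n}, B ∈ ℝ^{m×m}, C := diag(A,B), k ∈ {1,…,n+m}, r := C(n+m, k), i₁ := max{0, k−n}, i₂ := min{m, k}. Then there exists a permutation matrix P ∈ ℝ^{r×r} such that C^{(k)} = P · diag_{i∈{i₁,…,i₂}}(A^{(k−i)} ⊗ B^{(i)}) · P⁻¹, where M^{(0)} := 1 for any square matrix M. -/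
open Matrix

/-- The block-diagonal matrix `diag(A,B) ∈ ℝ^{(n+m)×(n+m)}`. -/
noncomputable def diagBlocks {n m : ℕ} (A : Matrix (Fin n) (Fin n) ℝ)
    (B : Matrix (Fin m) (Fin m) ℝ) : Matrix (Fin (n + m)) (Fin (n + m)) ℝ :=
  (Matrix.fromBlocks A 0 0 B).submatrix finSumFinEquiv.symm finSumFinEquiv.symm

lemma det_mismatch {k pa qa pb qb : ℕ} (h : pa ≠ pb)
    (X : Matrix (Fin pa) (Fin pb) ℝ) (Y : Matrix (Fin qa) (Fin qb) ℝ)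
    (eR : Fin k ≃ Fin pa ⊕ Fin qa) (eC : Fin k ≃ Fin pb ⊕ Fin qb) :
    ((Matrix.fromBlocks X 0 0 Y).submatrix eR eC).det = 0 := by
  rw [Matrix.det_apply]
  refine Finset.sum_eq_zero fun σ _ => ?_
  suffices hp : ∏ j, (Matrix.fromBlocks X 0 0 Y).submatrix eR eC (σ j) j = 0 by
    rw [hp, smul_zero]
  set S : Finset (Fin k) := Finset.univ.filter fun j => (eC j).isLeft with hSdef
  set T : Finset (Fin k) := Finset.univ.filter fun j => (eR j).isLeft with hTdef
  have hS : S.card = pb := by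
    have : S = Finset.univ.image (fun a : Fin pb => eC.symm (Sum.inl a)) := by
      ext j
      simp only [hSdef, Finset.mem_filter, Finset.mem_univ, true_and, Finset.mem_image,
        Sum.isLeft_iff]
      constructor
      · rintro ⟨a, ha⟩; exact ⟨a, by rw [← ha, Equiv.symm_apply_apply]⟩
      · rintro ⟨a, ha⟩; exact ⟨a, by rw [← ha]; simp⟩
    rw [this, Finset.card_image_of_injective _
      (fun x y hxy => Sum.inl_injective (eC.symm.injective hxy)),
      Finset.card_univ, Fintype.card_fin]
  have hT : T.card = pa := by
    have : T = Finset.univ.image (fun a : Fin pa => eR.symm (Sum.inl a)) := by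
      ext j
      simp only [hTdef, Finset.mem_filter, Finset.mem_univ, true_and, Finset.mem_image,
        Sum.isLeft_iff]
      constructor
      · rintro ⟨a, ha⟩; exact ⟨a, by rw [← ha, Equiv.symm_apply_apply]⟩
      · rintro ⟨a, ha⟩; exact ⟨a, by rw [← ha]; simp⟩
    rw [this, Finset.card_image_of_injective _
      (fun x y hxy => Sum.inl_injective (eR.symm.injective hxy)),
      Finset.card_univ, Fintype.card_fin]
  by_contra hcon
  have hne : ∀ j, (Matrix.fromBlocks X 0 0 Y).submatrix eR eC (σ j) j ≠ 0 := by
    intro j hj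
    exact hcon (Finset.prod_eq_zero (Finset.mem_univ j) hj)
  have key : ∀ j, j ∈ S ↔ σ j ∈ T := by
    intro j
    have hval := hne j
    simp only [Matrix.submatrix_apply] at hval
    simp only [hSdef, hTdef, Finset.mem_filter, Finset.mem_univ, true_and]
    rcases h1 : eR (σ j) with a | b <;> rcases h2 : eC j with c | d <;>
      rw [h1, h2] at hval <;> simp_all [Matrix.fromBlocks]
  have himg : S.image σ = T := by
    ext t
    rw [Finset.mem_image]
    constructor
    · rintro ⟨j, hj, rfl⟩; exact (key j).mp hj
    · intro ht
      exact ⟨σ.symm t, (key _).mpr (by simpa using ht), by simp⟩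
  have := hS ▸ hT ▸ himg ▸ Finset.card_image_of_injective S σ.injective
  omega

lemma orderEmb_disjSum {n m p q k : ℕ} (u : Finset (Fin n)) (v : Finset (Fin m))
    (hu : u.card = p) (hv : v.card = q) (hpq : p + q = k)
    (hs : ((u.disjSum v).map finSumFinEquiv.toEmbedding).card = k) (j : Fin k) :
    ((u.disjSum v).map finSumFinEquiv.toEmbedding).orderEmbOfFin hs j =
      finSumFinEquiv (Sum.map (u.orderEmbOfFin hu) (v.orderEmbOfFin hv)
        (finSumFinEquiv.symm (finCongr hpq.symm j))) := by
  have hmem : ∀ x : Fin k, finSumFinEquiv (Sum.map (u.orderEmbOfFin hu) (v.orderEmbOfFin hv)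
      (finSumFinEquiv.symm (finCongr hpq.symm x))) ∈
      (u.disjSum v).map finSumFinEquiv.toEmbedding := by
    intro x
    rcases hx : finSumFinEquiv.symm (finCongr hpq.symm x) with a | b
    · simp only [Sum.map_inl]
      exact Finset.mem_map_of_mem _ (Finset.inl_mem_disjSum.mpr (Finset.orderEmbOfFin_mem u hu a))
    · simp only [Sum.map_inr]
      exact Finset.mem_map_of_mem _ (Finset.inr_mem_disjSum.mpr (Finset.orderEmbOfFin_mem v hv b))
  have hmono : StrictMono (fun x : Fin k =>
      finSumFinEquiv (Sum.map (u.orderEmbOfFin hu) (v.orderEmbOfFin hv)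
        (finSumFinEquiv.symm (finCongr hpq.symm x)))) := by
    intro x1 x2 hlt
    simp only []
    show finSumFinEquiv (Sum.map (u.orderEmbOfFin hu) (v.orderEmbOfFin hv)
        (finSumFinEquiv.symm (finCongr hpq.symm x1))) <
      finSumFinEquiv (Sum.map (u.orderEmbOfFin hu) (v.orderEmbOfFin hv)
        (finSumFinEquiv.symm (finCongr hpq.symm x2)))
    have h1 : finSumFinEquiv (finSumFinEquiv.symm (finCongr hpq.symm x1)) = finCongr hpq.symm x1 :=
      finSumFinEquiv.apply_symm_apply _
    have h2 : finSumFinEquiv (finSumFinEquiv.symm (finCongr hpq.symm x2)) = finCongr hpq.symm x2 :=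
      finSumFinEquiv.apply_symm_apply _
    have hlt' : ((finCongr hpq.symm x1 : Fin (p + q)) : ℕ) < (finCongr hpq.symm x2 : ℕ) := hlt
    rcases hx1 : finSumFinEquiv.symm (finCongr hpq.symm x1) with a1 | b1 <;>
      rcases hx2 : finSumFinEquiv.symm (finCongr hpq.symm x2) with a2 | b2 <;>
      rw [hx1] at h1 <;> rw [hx2] at h2 <;>
      simp only [finSumFinEquiv_apply_left, finSumFinEquiv_apply_right] at h1 h2 <;>
      simp only [Sum.map_inl, Sum.map_inr, finSumFinEquiv_apply_left,
        finSumFinEquiv_apply_right, Fin.lt_def, Fin.coe_castAdd, Fin.coe_natAdd]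
    · exact (u.orderEmbOfFin hu).strictMono (show a1 < a2 by
        rw [Fin.lt_def]
        have e1 : ((a1 : ℕ)) = (finCongr hpq.symm x1 : ℕ) := by rw [← h1]; rfl
        have e2 : ((a2 : ℕ)) = (finCongr hpq.symm x2 : ℕ) := by rw [← h2]; rfl
        omega)
    · exact lt_of_lt_of_le (u.orderEmbOfFin hu a1).isLt (Nat.le_add_right n _)
    · exfalso
      have e1 : p + (b1 : ℕ) = (finCongr hpq.symm x1 : ℕ) := by rw [← h1]; rfl
      have e2 : ((a2 : ℕ)) = (finCongr hpq.symm x2 : ℕ) := by rw [← h2]; rfl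
      have := a2.isLt
      omega
    · refine Nat.add_lt_add_left ((v.orderEmbOfFin hv).strictMono (show b1 < b2 from ?_)) n
      rw [Fin.lt_def]
      have e1 : p + (b1 : ℕ) = (finCongr hpq.symm x1 : ℕ) := by rw [← h1]; rfl
      have e2 : p + (b2 : ℕ) = (finCongr hpq.symm x2 : ℕ) := by rw [← h2]; rfl
      omega
  exact (congrFun (Finset.orderEmbOfFin_unique hs hmem hmono) j).symm

lemma diagBlocks_apply_blocks {n m pa qa pb qb : ℕ} (A : Matrix (Fin n) (Fin n) ℝ)
    (B : Matrix (Fin m) (Fin m) ℝ) (r1 : Fin pa → Fin n) (r2 : Fin qa → Fin m)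
    (c1 : Fin pb → Fin n) (c2 : Fin qb → Fin m) (x : Fin pa ⊕ Fin qa) (y : Fin pb ⊕ Fin qb) :
    diagBlocks A B (finSumFinEquiv (Sum.map r1 r2 x)) (finSumFinEquiv (Sum.map c1 c2 y)) =
      Matrix.fromBlocks (A.submatrix r1 c1) 0 0 (B.submatrix r2 c2) x y := by
  rcases x with a | b <;> rcases y with c | d <;>
    simp [diagBlocks, Matrix.fromBlocks, Equiv.symm_apply_apply]

/-- Gluing a subset of `Fin n` and a subset of `Fin m` into a subset of `Fin (n+m)`. -/
noncomputable def glu {n m : ℕ} (k : ℕ)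
    (x : Σ i : ↥(Finset.Icc (k - n) (min m k)),
      ({s : Finset (Fin n) // s.card = k - i.1} × {s : Finset (Fin m) // s.card = i.1})) :
    {s : Finset (Fin (n + m)) // s.card = k} :=
  ⟨(x.2.1.1.disjSum x.2.2.1).map finSumFinEquiv.toEmbedding, by
    rcases x with ⟨⟨i, hi⟩, ⟨u, hu⟩, ⟨v, hv⟩⟩
    have hik : i ≤ k := (Finset.mem_Icc.mp hi).2.trans (min_le_right m k)
    have hin : k - n ≤ i := (Finset.mem_Icc.mp hi).1
    simp only [Finset.card_map, Finset.card_disjSum, hu, hv]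
    omega⟩

lemma glu_bijective {n m k : ℕ} : Function.Bijective (glu (n := n) (m := m) k) := by
  constructor
  · rintro ⟨⟨i, hi⟩, ⟨u, hu⟩, ⟨v, hv⟩⟩ ⟨⟨i', hi'⟩, ⟨u', hu'⟩, ⟨v', hv'⟩⟩ h
    have h1 : (u.disjSum v).map finSumFinEquiv.toEmbedding =
        (u'.disjSum v').map finSumFinEquiv.toEmbedding := congrArg Subtype.val h
    have h2 : u.disjSum v = u'.disjSum v' := Finset.map_injective _ h1
    have hu2 : u = u' := by
      have h3 := congrArg Finset.toLeft h2; simpa using h3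
    have hv2 : v = v' := by
      have h3 := congrArg Finset.toRight h2; simpa using h3
    have hii : i = i' := by
      have h3 : v.card = v'.card := by rw [hv2]
      rw [hv, hv'] at h3
      exact h3
    subst hii; subst hu2; subst hv2; rfl
  · rintro ⟨s, hs⟩
    set t := s.map finSumFinEquiv.symm.toEmbedding with ht
    have htc : t.card = k := by rw [ht, Finset.card_map, hs]
    have hcards := Finset.card_toLeft_add_card_toRight (u := t)
    have hLn : t.toLeft.card ≤ n := le_trans (Finset.card_le_univ _) (by simp)
    have hRm : t.toRight.card ≤ m := le_trans (Finset.card_le_univ _) (by simp)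
    refine ⟨⟨⟨t.toRight.card, ?_⟩, ⟨t.toLeft, ?_⟩, ⟨t.toRight, rfl⟩⟩, ?_⟩
    · rw [Finset.mem_Icc]
      constructor
      · omega
      · exact le_min hRm (by omega)
    · show t.toLeft.card = k - t.toRight.card
      omega
    · apply Subtype.ext
      show (t.toLeft.disjSum t.toRight).map finSumFinEquiv.toEmbedding = s
      rw [Finset.toLeft_disjSum_toRight, ht, Finset.map_map]
      ext x
      simp

/-- There is a permutation matrix `P` such that
`(diag(A,B))^{(k)} = P · diag_{i∈{i₁,…,i₂}} (A^{(k-i)} ⊗ B^{(i)}) · P⁻¹`,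
where `i₁ = max{0,k-n}`, `i₂ = min{m,k}`, and `M^{(0)} := 1`.  Conjugation by a
permutation matrix is expressed as reindexing along a bijection `e`. -/
theorem mulCompound_diagBlocks {n m k : ℕ} (hk : 1 ≤ k) (hkn : k ≤ n + m)
    (A : Matrix (Fin n) (Fin n) ℝ) (B : Matrix (Fin m) (Fin m) ℝ) :
    ∃ e : {s : Finset (Fin (n + m)) // s.card = k} ≃
        (Σ i : ↥(Finset.Icc (k - n) (min m k)),
          ({s : Finset (Fin n) // s.card = k - i.1} × {s : Finset (Fin m) // s.card = i.1})),
      mulCompound k (diagBlocks A B) =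
        (Matrix.blockDiagonal'
          (fun i : ↥(Finset.Icc (k - n) (min m k)) =>
            Matrix.kroneckerMap (· * ·) (mulCompound (k - i.1) A)
              (mulCompound i.1 B))).submatrix e e := by
  refine ⟨(Equiv.ofBijective _ (glu_bijective (n := n) (m := m) (k := k))).symm, ?_⟩
  have hmain : ∀ x y, mulCompound k (diagBlocks A B) (glu k x) (glu k y) =
      Matrix.blockDiagonal'
        (fun i : ↥(Finset.Icc (k - n) (min m k)) =>
          Matrix.kroneckerMap (· * ·) (mulCompound (k - i.1) A)
            (mulCompound i.1 B)) x y := by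
    rintro ⟨⟨i, hi⟩, ⟨u, hu⟩, ⟨v, hv⟩⟩ ⟨⟨i', hi'⟩, ⟨u', hu'⟩, ⟨v', hv'⟩⟩
    have hik : i ≤ k := (Finset.mem_Icc.mp hi).2.trans (min_le_right m k)
    have hik' : i' ≤ k := (Finset.mem_Icc.mp hi').2.trans (min_le_right m k)
    have hpq : (k - i) + i = k := by omega
    have hpq' : (k - i') + i' = k := by omega
    change u.card = k - i at hu
    change v.card = i at hv
    change u'.card = k - i' at hu'
    change v'.card = i' at hv'
    have hs1 : ((u.disjSum v).map finSumFinEquiv.toEmbedding).card = k := by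
      simp only [Finset.card_map, Finset.card_disjSum, hu, hv]; omega
    have hs2 : ((u'.disjSum v').map finSumFinEquiv.toEmbedding).card = k := by
      simp only [Finset.card_map, Finset.card_disjSum, hu', hv']; omega
    by_cases hii : i = i'
    · subst hii
      have hproof : hi' = hi := rfl
      subst hproof
      have hsub : (diagBlocks A B).submatrix
          (((u.disjSum v).map finSumFinEquiv.toEmbedding).orderEmbOfFin hs1)
          (((u'.disjSum v').map finSumFinEquiv.toEmbedding).orderEmbOfFin hs2) =
          (Matrix.fromBlocks
            (A.submatrix (u.orderEmbOfFin hu) (u'.orderEmbOfFin hu')) 0 0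
            (B.submatrix (v.orderEmbOfFin hv) (v'.orderEmbOfFin hv'))).submatrix
            ((finCongr hpq.symm).trans finSumFinEquiv.symm)
            ((finCongr hpq.symm).trans finSumFinEquiv.symm) := by
        ext j1 j2
        rw [Matrix.submatrix_apply, Matrix.submatrix_apply,
          orderEmb_disjSum u v hu hv hpq, orderEmb_disjSum u' v' hu' hv' hpq]
        exact diagBlocks_apply_blocks A B _ _ _ _ _ _
      show ((diagBlocks A B).submatrix
          (((u.disjSum v).map finSumFinEquiv.toEmbedding).orderEmbOfFin hs1)
          (((u'.disjSum v').map finSumFinEquiv.toEmbedding).orderEmbOfFin hs2)).det = _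
      rw [hsub, Matrix.det_submatrix_equiv_self, Matrix.det_fromBlocks_zero₂₁]
      exact (Matrix.blockDiagonal'_apply_eq
        (fun i : ↥(Finset.Icc (k - n) (min m k)) =>
          Matrix.kroneckerMap (· * ·) (mulCompound (k - i.1) A) (mulCompound i.1 B))
        ⟨i, hi'⟩ (⟨u, hu⟩, ⟨v, hv⟩) (⟨u', hu'⟩, ⟨v', hv'⟩)).symm
    · have hsub : (diagBlocks A B).submatrix
          (((u.disjSum v).map finSumFinEquiv.toEmbedding).orderEmbOfFin hs1)
          (((u'.disjSum v').map finSumFinEquiv.toEmbedding).orderEmbOfFin hs2) =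
          (Matrix.fromBlocks
            (A.submatrix (u.orderEmbOfFin hu) (u'.orderEmbOfFin hu')) 0 0
            (B.submatrix (v.orderEmbOfFin hv) (v'.orderEmbOfFin hv'))).submatrix
            ((finCongr hpq.symm).trans finSumFinEquiv.symm)
            ((finCongr hpq'.symm).trans finSumFinEquiv.symm) := by
        ext j1 j2
        rw [Matrix.submatrix_apply, Matrix.submatrix_apply,
          orderEmb_disjSum u v hu hv hpq, orderEmb_disjSum u' v' hu' hv' hpq']
        exact diagBlocks_apply_blocks A B _ _ _ _ _ _
      show ((diagBlocks A B).submatrix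
          (((u.disjSum v).map finSumFinEquiv.toEmbedding).orderEmbOfFin hs1)
          (((u'.disjSum v').map finSumFinEquiv.toEmbedding).orderEmbOfFin hs2)).det = _
      rw [hsub, det_mismatch (show k - i ≠ k - i' by omega) _ _ _ _]
      exact (Matrix.blockDiagonal'_apply_ne _ _ _
        (fun h => hii (congrArg Subtype.val h))).symm
  funext α β
  obtain ⟨x, rfl⟩ := (glu_bijective (n := n) (m := m) (k := k)).surjective α
  obtain ⟨y, rfl⟩ := (glu_bijective (n := n) (m := m) (k := k)).surjective β
  rw [Matrix.submatrix_apply]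
  have hx : (Equiv.ofBijective _ (glu_bijective (n := n) (m := m) (k := k))).symm (glu k x) = x :=
    Equiv.symm_apply_apply _ x
  have hy : (Equiv.ofBijective _ (glu_bijective (n := n) (m := m) (k := k))).symm (glu k y) = y :=
    Equiv.symm_apply_apply _ y
  rw [hx, hy]
  exact hmain x y
end

section
/- Let A ∈ ℝ^{n×n}, B ∈ ℝ^{m×m}, C := diag(A,B), k ∈ {1,…,n+m}, r := C(n+m, k), i₁ := max{0, k−n}, i₂ := min{m, k}. Then there exists a permutation matrix P ∈ ℝ^{r×r} such that C^{[k]} = P · diag_{i∈{i₁,…,i₂}}(A^{[k−i]} ⊕ B^{[i]}) · P⁻¹, where M^{[0]} := 0 and A ⊕ B := A ⊗ I_m + I_n ⊗ B is the Kronecker sum. -/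
open Matrix

/-- The Kronecker sum `A ⊕ B := A ⊗ I + I ⊗ B`. -/
noncomputable def kroneckerSum {ι κ : Type*} [Fintype ι] [Fintype κ]
    [DecidableEq ι] [DecidableEq κ] (A : Matrix ι ι ℝ) (B : Matrix κ κ ℝ) :
    Matrix (ι × κ) (ι × κ) ℝ :=
  Matrix.kroneckerMap (· * ·) A 1 + Matrix.kroneckerMap (· * ·) 1 B

/-!
Since `exp (t • diag(A, B)) = diag(exp (t • A), exp (t • B))`, it suffices to understand the
`k × k` minors of a block-diagonal matrix `diag(M, N)`. Split each `k`-subset of `Fin (n + m)`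
into its parts in `Fin n` and in `Fin m`. If the row set and the column set have second parts of
different sizes, the minor vanishes: its submatrix factors through a space of dimension `< k`.
Otherwise, with second parts of size `i`, the minor is the product of a `(k - i)`-minor of `M` and
an `i`-minor of `N`. Differentiating this product at `t = 0` by the Leibniz rule, where the
compounds of `exp 0 = 1` are identities, gives the entry of `A^{[k-i]} ⊗ I + I ⊗ B^{[i]}`.
-/

def finsetFinAddEquiv (n m : ℕ) : Finset (Fin (n + m)) ≃ Finset (Fin n) × Finset (Fin m) :=
  finSumFinEquiv.symm.finsetCongr.trans Finset.sumEquiv.toEquiv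

section FinsetFinAdd

variable {n m : ℕ}

lemma finsetFinAddEquiv_symm_apply (a : Finset (Fin n)) (b : Finset (Fin m)) :
    (finsetFinAddEquiv n m).symm (a, b) = (a.disjSum b).map finSumFinEquiv.toEmbedding :=
  rfl

lemma card_finsetFinAddEquiv_symm (a : Finset (Fin n)) (b : Finset (Fin m)) :
    ((finsetFinAddEquiv n m).symm (a, b)).card = a.card + b.card := by
  rw [finsetFinAddEquiv_symm_apply, Finset.card_map, Finset.card_disjSum]

lemma card_finsetFinAddEquiv (s : Finset (Fin (n + m))) :
    (finsetFinAddEquiv n m s).1.card + (finsetFinAddEquiv n m s).2.card = s.card := by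
  conv_rhs => rw [← (finsetFinAddEquiv n m).symm_apply_apply s]
  rw [card_finsetFinAddEquiv_symm]

lemma strictMono_finSumFinEquiv_sumMap {j i : ℕ} {f : Fin j → Fin n} {g : Fin i → Fin m}
    (hf : StrictMono f) (hg : StrictMono g) :
    StrictMono fun q => finSumFinEquiv (Sum.map f g (finSumFinEquiv.symm q)) := by
  intro p q hpq
  induction p using Fin.addCases <;> induction q using Fin.addCases <;>
    simp only [finSumFinEquiv_symm_apply_castAdd, finSumFinEquiv_symm_apply_natAdd, Sum.map_inl,
      Sum.map_inr, finSumFinEquiv_apply_left, finSumFinEquiv_apply_right, Fin.lt_def,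
      Fin.val_castAdd, Fin.val_natAdd] at hpq ⊢
  case left.left a b => exact hf hpq
  case left.right a b => have := (f a).isLt; omega
  case right.left a b => have := b.isLt; omega
  case right.right a b => exact Nat.add_lt_add_left (hg (Nat.lt_of_add_lt_add_left hpq)) n

lemma orderEmbOfFin_finsetFinAddEquiv_symm {a : Finset (Fin n)} {b : Finset (Fin m)}
    {j i k : ℕ} (ha : a.card = j) (hb : b.card = i) (hk : k = j + i)
    (h : ((finsetFinAddEquiv n m).symm (a, b)).card = k) (p : Fin k) :
    ((finsetFinAddEquiv n m).symm (a, b)).orderEmbOfFin h p =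
      finSumFinEquiv (Sum.map (a.orderEmbOfFin ha) (b.orderEmbOfFin hb)
        (finSumFinEquiv.symm (Fin.cast hk p))) := by
  refine congrFun (Finset.orderEmbOfFin_unique h (f := fun p => finSumFinEquiv
    (Sum.map (a.orderEmbOfFin ha) (b.orderEmbOfFin hb) (finSumFinEquiv.symm (Fin.cast hk p))))
    (fun p => ?_) ?_).symm p
  · rw [finsetFinAddEquiv_symm_apply, Finset.mem_map_equiv, Equiv.symm_apply_apply]
    rcases finSumFinEquiv.symm (Fin.cast hk p) with x | x <;>
      simp [Finset.orderEmbOfFin_mem]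
  · exact (strictMono_finSumFinEquiv_sumMap (a.orderEmbOfFin ha).strictMono
      (b.orderEmbOfFin hb).strictMono).comp (Fin.cast_strictMono hk)

end FinsetFinAdd

lemma card_snd_finsetFinAddEquiv_mem_Icc {n m k : ℕ} {s : Finset (Fin (n + m))}
    (hs : s.card = k) :
    (finsetFinAddEquiv n m s).2.card ∈ Finset.Icc (k - n) (min m k) := by
  have hsum := card_finsetFinAddEquiv s
  have hn := (Finset.card_le_univ (finsetFinAddEquiv n m s).1).trans_eq (Fintype.card_fin n)
  have hm := (Finset.card_le_univ (finsetFinAddEquiv n m s).2).trans_eq (Fintype.card_fin m)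
  rw [Finset.mem_Icc, le_min_iff]
  omega

def finsetCardSigmaEquiv (n m k : ℕ) : {s : Finset (Fin (n + m)) // s.card = k} ≃
    Σ i : ↥(Finset.Icc (k - n) (min m k)),
      {a : Finset (Fin n) // a.card = k - i.1} × {b : Finset (Fin m) // b.card = i.1} where
  toFun s := ⟨⟨_, card_snd_finsetFinAddEquiv_mem_Icc s.2⟩,
    ⟨(finsetFinAddEquiv n m s).1, by
      change _ = k - (finsetFinAddEquiv n m s).2.card
      have := card_finsetFinAddEquiv s.1
      omega⟩,
    ⟨(finsetFinAddEquiv n m s).2, rfl⟩⟩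
  invFun x := ⟨(finsetFinAddEquiv n m).symm (x.2.1, x.2.2), by
    have := (Finset.mem_Icc.mp x.1.2).2
    rw [card_finsetFinAddEquiv_symm, x.2.1.2, x.2.2.2]
    omega⟩
  left_inv s := Subtype.ext ((finsetFinAddEquiv n m).symm_apply_apply s)
  right_inv := by
    rintro ⟨⟨i, hi⟩, ⟨a, ha⟩, ⟨b, hb⟩⟩
    obtain rfl : (finsetFinAddEquiv n m ((finsetFinAddEquiv n m).symm (a, b))).2.card = i := by
      rw [Equiv.apply_symm_apply, hb]
    simp only [Equiv.apply_symm_apply]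

namespace Matrix

variable {R : Type*} [CommRing R] {ι₁ ι₂ κ₁ κ₂ : Type*}

lemma rank_fromBlocks_zero_zero_le_card_width_add_card_height [StrongRankCondition R]
    [Fintype ι₂] [Fintype κ₁] [Fintype κ₂] [DecidableEq ι₂] [DecidableEq κ₁]
    (M₁ : Matrix ι₁ κ₁ R) (M₂ : Matrix ι₂ κ₂ R) :
    (fromBlocks M₁ 0 0 M₂).rank ≤ Fintype.card κ₁ + Fintype.card ι₂ := by
  have h := (rank_mul_le_left (fromBlocks M₁ 0 0 (1 : Matrix ι₂ ι₂ R))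
    (fromBlocks (1 : Matrix κ₁ κ₁ R) 0 0 M₂)).trans (rank_le_card_width _)
  simpa only [fromBlocks_multiply, Fintype.card_sum, Matrix.mul_one, Matrix.one_mul,
    Matrix.mul_zero, Matrix.zero_mul, add_zero, zero_add] using h

lemma rank_fromBlocks_zero_zero_le_card_height_add_card_width [StrongRankCondition R]
    [Fintype ι₁] [Fintype κ₁] [Fintype κ₂] [DecidableEq ι₁] [DecidableEq κ₂]
    (M₁ : Matrix ι₁ κ₁ R) (M₂ : Matrix ι₂ κ₂ R) :
    (fromBlocks M₁ 0 0 M₂).rank ≤ Fintype.card ι₁ + Fintype.card κ₂ := by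
  have h := (rank_mul_le_left (fromBlocks (1 : Matrix ι₁ ι₁ R) 0 0 M₂)
    (fromBlocks M₁ 0 0 (1 : Matrix κ₂ κ₂ R))).trans (rank_le_card_width _)
  simpa only [fromBlocks_multiply, Fintype.card_sum, Matrix.mul_one, Matrix.one_mul,
    Matrix.mul_zero, Matrix.zero_mul, add_zero, zero_add] using h

lemma det_submatrix_fromBlocks_zero_zero_of_card_ne [IsDomain R] {ι : Type*} [Fintype ι]
    [DecidableEq ι] [Fintype ι₁] [Fintype ι₂] [Fintype κ₁] [Fintype κ₂] [DecidableEq ι₁]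
    [DecidableEq ι₂] [DecidableEq κ₁] [DecidableEq κ₂] (M₁ : Matrix ι₁ κ₁ R)
    (M₂ : Matrix ι₂ κ₂ R) (e : ι ≃ ι₁ ⊕ ι₂) (f : ι ≃ κ₁ ⊕ κ₂)
    (h : Fintype.card ι₁ ≠ Fintype.card κ₁) :
    ((fromBlocks M₁ 0 0 M₂).submatrix e f).det = 0 := by
  by_contra hdet
  have hrank := rank_of_det_ne_zero hdet
  rw [rank_submatrix] at hrank
  have hι := Fintype.card_congr e
  have hκ := Fintype.card_congr f
  rw [Fintype.card_sum] at hι hκ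
  have := rank_fromBlocks_zero_zero_le_card_width_add_card_height M₁ M₂
  have := rank_fromBlocks_zero_zero_le_card_height_add_card_width M₁ M₂
  omega

end Matrix

section Compound

variable {n : ℕ}

lemma mulCompound_one {R : Type*} [CommRing R] {k : ℕ} :
    mulCompound k (1 : Matrix (Fin n) (Fin n) R) = 1 := by
  ext ⟨α, hα⟩ ⟨β, hβ⟩
  by_cases hαβ : α = β
  · subst hαβ
    rw [mulCompound, one_apply_eq, ← RelEmbedding.coe_toEmbedding, submatrix_one_embedding,
      det_one]
  · rw [one_apply_ne (by simpa using hαβ)]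
    obtain ⟨x, hxβ, hxα⟩ := Finset.not_subset.mp fun hsub =>
      hαβ (Finset.eq_of_subset_of_card_le hsub (by omega)).symm
    obtain ⟨q, rfl⟩ : x ∈ Set.range (β.orderEmbOfFin hβ) := by
      rwa [Finset.range_orderEmbOfFin]
    exact det_eq_zero_of_column_eq_zero q fun p =>
      one_apply_ne (ne_of_mem_of_not_mem (α.orderEmbOfFin_mem hα p) hxα)

lemma differentiable_mulCompound {j : ℕ} {M : ℝ → Matrix (Fin n) (Fin n) ℝ}
    (hM : ∀ x y, Differentiable ℝ fun t => M t x y) (α β : {s : Finset (Fin n) // s.card = j}) :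
    Differentiable ℝ fun t => mulCompound j (M t) α β := by
  simp only [mulCompound, det_apply, submatrix_apply]
  fun_prop

end Compound

section Exp

open NormedSpace

variable {n m : ℕ}

lemma diagBlocks_smul (t : ℝ) (A : Matrix (Fin n) (Fin n) ℝ) (B : Matrix (Fin m) (Fin m) ℝ) :
    t • diagBlocks A B = diagBlocks (t • A) (t • B) := by
  change (t • fromBlocks A 0 0 B).submatrix _ _ = _
  rw [fromBlocks_smul, smul_zero, smul_zero]
  rfl

variable (n m) in
noncomputable def diagBlocksRingHom : Matrix (Fin n) (Fin n) ℝ × Matrix (Fin m) (Fin m) ℝ →+*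
    Matrix (Fin (n + m)) (Fin (n + m)) ℝ where
  toFun p := diagBlocks p.1 p.2
  map_one' := by simp [diagBlocks]
  map_mul' p q := by simp [diagBlocks, fromBlocks_multiply]
  map_zero' := by simp [diagBlocks]
  map_add' p q := by
    change _ = (fromBlocks p.1 0 0 p.2 + fromBlocks q.1 0 0 q.2).submatrix _ _
    rw [fromBlocks_add, add_zero, add_zero]
    rfl

-- `exp` on matrices needs no norm, but `map_exp` and `hasDerivAt_exp_smul_const` are stated for
-- normed algebras; any of the equivalent matrix norms will do.
attribute [local instance] Matrix.linftyOpNormedRing Matrix.linftyOpNormedAlgebra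

lemma exp_diagBlocks (A : Matrix (Fin n) (Fin n) ℝ) (B : Matrix (Fin m) (Fin m) ℝ) :
    exp (diagBlocks A B) = diagBlocks (exp A) (exp B) := by
  have hcont : Continuous (diagBlocksRingHom n m) := by
    show Continuous fun p : _ × _ => diagBlocks p.1 p.2
    unfold diagBlocks
    fun_prop
  have hexp : exp (A, B) = (exp A, exp B) := Prod.ext (Prod.fst_exp _) (Prod.snd_exp _)
  calc exp (diagBlocks A B) = diagBlocksRingHom n m (exp (A, B)) :=
        (map_exp _ hcont (A, B)).symm
    _ = diagBlocks (exp A) (exp B) := by rw [hexp]; rfl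

lemma differentiable_exp_smul_apply {ι : Type*} [Fintype ι] [DecidableEq ι] (A : Matrix ι ι ℝ)
    (x y : ι) : Differentiable ℝ fun t : ℝ => exp (t • A) x y := fun t =>
  (entryLinearMap ℝ ℝ x y).toContinuousLinearMap.differentiableAt.comp t
    (hasDerivAt_exp_smul_const A t).differentiableAt

end Exp

section DiagBlocks

open NormedSpace

variable {n m : ℕ}

lemma mulCompound_diagBlocks_eq_det {k j i j' i' : ℕ} (M : Matrix (Fin n) (Fin n) ℝ)
    (N : Matrix (Fin m) (Fin m) ℝ) {a a' : Finset (Fin n)} {b b' : Finset (Fin m)}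
    (ha : a.card = j) (hb : b.card = i) (ha' : a'.card = j') (hb' : b'.card = i')
    (hk : k = j + i) (hk' : k = j' + i') (h : ((finsetFinAddEquiv n m).symm (a, b)).card = k)
    (h' : ((finsetFinAddEquiv n m).symm (a', b')).card = k) :
    mulCompound k (diagBlocks M N) ⟨_, h⟩ ⟨_, h'⟩ =
      ((fromBlocks (M.submatrix (a.orderEmbOfFin ha) (a'.orderEmbOfFin ha')) 0 0
          (N.submatrix (b.orderEmbOfFin hb) (b'.orderEmbOfFin hb'))).submatrix
        ((finCongr hk).trans finSumFinEquiv.symm)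
        ((finCongr hk').trans finSumFinEquiv.symm)).det := by
  rw [mulCompound]
  congr 1
  ext p q
  simp only [submatrix_apply, orderEmbOfFin_finsetFinAddEquiv_symm ha hb hk,
    orderEmbOfFin_finsetFinAddEquiv_symm ha' hb' hk', diagBlocks, Equiv.symm_apply_apply,
    Equiv.trans_apply, finCongr_apply]
  rcases finSumFinEquiv.symm (Fin.cast hk p) with x | x <;>
    rcases finSumFinEquiv.symm (Fin.cast hk' q) with y | y <;> rfl

lemma mulCompound_diagBlocks_s12 {k j i : ℕ} (M : Matrix (Fin n) (Fin n) ℝ)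
    (N : Matrix (Fin m) (Fin m) ℝ) {a a' : Finset (Fin n)} {b b' : Finset (Fin m)}
    (ha : a.card = j) (hb : b.card = i) (ha' : a'.card = j) (hb' : b'.card = i)
    (h : ((finsetFinAddEquiv n m).symm (a, b)).card = k)
    (h' : ((finsetFinAddEquiv n m).symm (a', b')).card = k) :
    mulCompound k (diagBlocks M N) ⟨_, h⟩ ⟨_, h'⟩ =
      mulCompound j M ⟨a, ha⟩ ⟨a', ha'⟩ * mulCompound i N ⟨b, hb⟩ ⟨b', hb'⟩ := by
  have hk : k = j + i := by rw [← h, card_finsetFinAddEquiv_symm, ha, hb]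
  rw [mulCompound_diagBlocks_eq_det M N ha hb ha' hb' hk hk, det_submatrix_equiv_self,
    det_fromBlocks_zero₂₁]
  rfl

lemma mulCompound_diagBlocks_of_ne {k : ℕ} (M : Matrix (Fin n) (Fin n) ℝ)
    (N : Matrix (Fin m) (Fin m) ℝ) {a a' : Finset (Fin n)} {b b' : Finset (Fin m)}
    (hb : b.card ≠ b'.card) (h : ((finsetFinAddEquiv n m).symm (a, b)).card = k)
    (h' : ((finsetFinAddEquiv n m).symm (a', b')).card = k) :
    mulCompound k (diagBlocks M N) ⟨_, h⟩ ⟨_, h'⟩ = 0 := by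
  rw [card_finsetFinAddEquiv_symm] at h h'
  rw [mulCompound_diagBlocks_eq_det M N rfl rfl rfl rfl h.symm h'.symm,
    det_submatrix_fromBlocks_zero_zero_of_card_ne]
  simp only [Fintype.card_fin]
  omega

lemma exp_smul_diagBlocks (t : ℝ) (A : Matrix (Fin n) (Fin n) ℝ)
    (B : Matrix (Fin m) (Fin m) ℝ) :
    exp (t • diagBlocks A B) = diagBlocks (exp (t • A)) (exp (t • B)) := by
  rw [diagBlocks_smul, exp_diagBlocks]

lemma addCompound_diagBlocks_apply {k j i : ℕ} (A : Matrix (Fin n) (Fin n) ℝ)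
    (B : Matrix (Fin m) (Fin m) ℝ) {a a' : Finset (Fin n)} {b b' : Finset (Fin m)}
    (ha : a.card = j) (hb : b.card = i) (ha' : a'.card = j) (hb' : b'.card = i)
    (h : ((finsetFinAddEquiv n m).symm (a, b)).card = k)
    (h' : ((finsetFinAddEquiv n m).symm (a', b')).card = k) :
    addCompound k (diagBlocks A B) ⟨_, h⟩ ⟨_, h'⟩ =
      kroneckerSum (addCompound j A) (addCompound i B)
        (⟨a, ha⟩, ⟨b, hb⟩) (⟨a', ha'⟩, ⟨b', hb'⟩) := by
  have hprod : (fun t : ℝ => mulCompound k (exp (t • diagBlocks A B)) ⟨_, h⟩ ⟨_, h'⟩) =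
      fun t => mulCompound j (exp (t • A)) ⟨a, ha⟩ ⟨a', ha'⟩ *
        mulCompound i (exp (t • B)) ⟨b, hb⟩ ⟨b', hb'⟩ := by
    funext t
    rw [exp_smul_diagBlocks, mulCompound_diagBlocks_s12]
  rw [addCompound, hprod, deriv_fun_mul
    (differentiable_mulCompound (differentiable_exp_smul_apply A) _ _ 0)
    (differentiable_mulCompound (differentiable_exp_smul_apply B) _ _ 0)]
  simp only [zero_smul, exp_zero, mulCompound_one]
  rfl

lemma addCompound_diagBlocks_of_ne {k : ℕ} (A : Matrix (Fin n) (Fin n) ℝ)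
    (B : Matrix (Fin m) (Fin m) ℝ) {a a' : Finset (Fin n)} {b b' : Finset (Fin m)}
    (hb : b.card ≠ b'.card) (h : ((finsetFinAddEquiv n m).symm (a, b)).card = k)
    (h' : ((finsetFinAddEquiv n m).symm (a', b')).card = k) :
    addCompound k (diagBlocks A B) ⟨_, h⟩ ⟨_, h'⟩ = 0 := by
  simp only [addCompound, exp_smul_diagBlocks, mulCompound_diagBlocks_of_ne _ _ hb, deriv_const]

end DiagBlocks

-- Conjugation by the permutation matrix `P` is reindexing along the bijection `e`.
theorem addCompound_diagBlocks_general {n m k : ℕ}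
    (A : Matrix (Fin n) (Fin n) ℝ) (B : Matrix (Fin m) (Fin m) ℝ) :
    ∃ e : {s : Finset (Fin (n + m)) // s.card = k} ≃
        (Σ i : ↥(Finset.Icc (k - n) (min m k)),
          ({s : Finset (Fin n) // s.card = k - i.1} × {s : Finset (Fin m) // s.card = i.1})),
      addCompound k (diagBlocks A B) =
        (Matrix.blockDiagonal'
          (fun i : ↥(Finset.Icc (k - n) (min m k)) =>
            kroneckerSum (addCompound (k - i.1) A) (addCompound i.1 B))).submatrix e e := by
  refine ⟨finsetCardSigmaEquiv n m k, ?_⟩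
  ext α β
  obtain ⟨⟨i, ⟨a, ha⟩, ⟨b, hb⟩⟩, rfl⟩ := (finsetCardSigmaEquiv n m k).symm.surjective α
  obtain ⟨⟨i', ⟨a', ha'⟩, ⟨b', hb'⟩⟩, rfl⟩ :=
    (finsetCardSigmaEquiv n m k).symm.surjective β
  rw [submatrix_apply, Equiv.apply_symm_apply, Equiv.apply_symm_apply]
  obtain rfl | hii' := eq_or_ne i i'
  · rw [blockDiagonal'_apply_eq]
    exact addCompound_diagBlocks_apply A B ha hb ha' hb' _ _
  · rw [blockDiagonal'_apply_ne _ _ _ hii']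
    exact addCompound_diagBlocks_of_ne A B
      (by rw [hb, hb']; exact Subtype.coe_ne_coe.mpr hii') _ _

/-- There is a permutation matrix `P` such that
`(diag(A,B))^{[k]} = P · diag_{i∈{i₁,…,i₂}} (A^{[k-i]} ⊕ B^{[i]}) · P⁻¹`,
where `i₁ = max{0,k-n}`, `i₂ = min{m,k}`, `M^{[0]} := 0`, and `⊕` is the Kronecker
sum.  Conjugation by a permutation matrix is expressed as reindexing along a
bijection `e`. -/
theorem addCompound_diagBlocks {n m k : ℕ} (hk : 1 ≤ k) (hkn : k ≤ n + m)
    (A : Matrix (Fin n) (Fin n) ℝ) (B : Matrix (Fin m) (Fin m) ℝ) :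
    ∃ e : {s : Finset (Fin (n + m)) // s.card = k} ≃
        (Σ i : ↥(Finset.Icc (k - n) (min m k)),
          ({s : Finset (Fin n) // s.card = k - i.1} × {s : Finset (Fin m) // s.card = i.1})),
      addCompound k (diagBlocks A B) =
        (Matrix.blockDiagonal'
          (fun i : ↥(Finset.Icc (k - n) (min m k)) =>
            kroneckerSum (addCompound (k - i.1) A) (addCompound i.1 B))).submatrix e e :=
  addCompound_diagBlocks_general A B
end

section
/- For matrix measures μ induced by Lᵖ norms (p ∈ {1,2,∞}) and any A ∈ ℝ^{n×n}, B ∈ ℝ^{m×m}, the matrix measure of the Kronecker sum is additive: μ(A ⊕ B) = μ(A) + μ(B), where A ⊕ B := A ⊗ I_m + I_n ⊗ B. -/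
/-!
For every `p ∈ [1, ∞]` the `Lᵖ` operator norm is multiplicative on Kronecker products:
`M ⊗ N = (M ⊗ I)(I ⊗ N)`, where `I ⊗ N` acts block by block on `ℓᵖ(ι; ℓᵖ(κ))` and `M ⊗ I` is
`I ⊗ M` up to a permutation of coordinates, gives `≤`, and testing on `x ⊗ y` gives `≥`.
Since `(I + εA) ⊗ (I + εB) = I + ε (A ⊕ B) + ε² A ⊗ B`, this yields
`‖I + ε (A ⊕ B)‖ = ‖I + εA‖ ‖I + εB‖ + O(ε²)`, and the product rule for the one-sided
difference quotients at `ε = 0` gives `μ(A ⊕ B) = μ(A) + μ(B)`.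
-/
open Matrix Filter

/-- The operator norm of a matrix acting on `ℝ^ι` equipped with the `Lᵖ` norm. -/
noncomputable def lpOpNorm (p : ENNReal) [Fact (1 ≤ p)] {ι : Type*} [Fintype ι]
    (A : Matrix ι ι ℝ) : ℝ :=
  ‖LinearMap.toContinuousLinearMap
    (((WithLp.linearEquiv p ℝ (ι → ℝ)).symm.toLinearMap.comp
        A.mulVecLin).comp (WithLp.linearEquiv p ℝ (ι → ℝ)).toLinearMap)‖

open scoped ENNReal Kronecker Topology
open WithLp (toLp ofLp)

namespace PiLp

variable {p : ℝ≥0∞} [Fact (1 ≤ p)] {ι : Type*} [Fintype ι] {β γ : ι → Type*}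
  [∀ i, SeminormedAddCommGroup (β i)] [∀ i, SeminormedAddCommGroup (γ i)]

theorem norm_le_norm_of_forall_norm_le {x : PiLp p β} {y : PiLp p γ}
    (h : ∀ i, ‖x i‖ ≤ ‖y i‖) : ‖x‖ ≤ ‖y‖ := by
  rcases p.dichotomy with rfl | hp
  · simp only [norm_eq_ciSup]
    exact ciSup_mono (Set.finite_range _).bddAbove h
  · have hp₀ : 0 < p.toReal := one_pos.trans_le hp
    simp only [norm_eq_sum hp₀]
    gcongr with i
    exact h i

theorem norm_toLp_norm (x : PiLp p β) : ‖toLp p fun i => ‖x i‖‖ = ‖x‖ :=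
  (norm_le_norm_of_forall_norm_le fun i => (norm_norm (x i)).le).antisymm
    (norm_le_norm_of_forall_norm_le fun i => (norm_norm (x i)).ge)

theorem norm_le_mul_norm_of_forall_norm_le_mul {x : PiLp p β} {y : PiLp p γ} {c : ℝ}
    (hc : 0 ≤ c) (h : ∀ i, ‖x i‖ ≤ c * ‖y i‖) : ‖x‖ ≤ c * ‖y‖ := by
  calc ‖x‖ ≤ ‖c • toLp p fun i => ‖y i‖‖ :=
        norm_le_norm_of_forall_norm_le fun i => by simpa [abs_of_nonneg hc] using h i
    _ = c * ‖y‖ := by rw [norm_smul, norm_toLp_norm, Real.norm_of_nonneg hc]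

theorem norm_eq_mul_norm_of_forall_norm_eq_mul {x : PiLp p β} {y : PiLp p γ} {c : ℝ}
    (hc : 0 ≤ c) (h : ∀ i, ‖x i‖ = c * ‖y i‖) : ‖x‖ = c * ‖y‖ := by
  calc ‖x‖ = ‖c • toLp p fun i => ‖y i‖‖ := by rw [← norm_toLp_norm x, funext h]; rfl
    _ = c * ‖y‖ := by rw [norm_smul, norm_toLp_norm, Real.norm_of_nonneg hc]

end PiLp

section

variable (p : ℝ≥0∞) [Fact (1 ≤ p)] (𝕜 : Type*) [NormedField 𝕜] (ι κ E : Type*) [Fintype ι]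
  [Fintype κ] [SeminormedAddCommGroup E] [NormedSpace 𝕜 E]

noncomputable def LinearIsometryEquiv.piLpCurryProd :
    WithLp p (ι × κ → E) ≃ₗᵢ[𝕜] PiLp p (fun _ : ι => WithLp p (κ → E)) :=
  (LinearIsometryEquiv.piLpCongrLeft p 𝕜 E (Equiv.sigmaEquivProd ι κ).symm).trans
    (LinearIsometryEquiv.piLpCurry 𝕜 p fun _ _ => E)

variable {p 𝕜 ι κ E} in
@[simp]
theorem LinearIsometryEquiv.piLpCurryProd_apply (z : WithLp p (ι × κ → E)) (i : ι) (k : κ) :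
    piLpCurryProd p 𝕜 ι κ E z i k = z (i, k) := rfl

end

theorem PiLp.norm_toLp_mul {p : ℝ≥0∞} [Fact (1 ≤ p)] {𝕜 : Type*} [NormedField 𝕜]
    {ι κ : Type*} [Fintype ι] [Fintype κ] (x : WithLp p (ι → 𝕜)) (y : WithLp p (κ → 𝕜)) :
    ‖toLp p fun ik : ι × κ => x ik.1 * y ik.2‖ = ‖x‖ * ‖y‖ := by
  rw [← (LinearIsometryEquiv.piLpCurryProd p 𝕜 ι κ 𝕜).norm_map, mul_comm]
  refine norm_eq_mul_norm_of_forall_norm_eq_mul (norm_nonneg _) fun i => ?_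
  have : LinearIsometryEquiv.piLpCurryProd p 𝕜 ι κ 𝕜 (toLp p fun ik => x ik.1 * y ik.2) i
      = x i • y := by ext k; simp
  rw [this, norm_smul, mul_comm]

namespace ContinuousLinearMap

variable {𝕜 E F G H : Type*} [NontriviallyNormedField 𝕜]
  [SeminormedAddCommGroup E] [SeminormedAddCommGroup F] [SeminormedAddCommGroup G]
  [SeminormedAddCommGroup H] [NormedSpace 𝕜 E] [NormedSpace 𝕜 F] [NormedSpace 𝕜 G]
  [NormedSpace 𝕜 H]

theorem mul_opNorm_le_of_forall (g : G →L[𝕜] H) {a B : ℝ} (ha : 0 ≤ a) (hB : 0 ≤ B)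
    (h : ∀ y, a * ‖g y‖ ≤ B * ‖y‖) : a * ‖g‖ ≤ B := by
  rcases ha.eq_or_lt with rfl | ha
  · simpa using hB
  rw [← le_div_iff₀' ha]
  exact g.opNorm_le_bound (by positivity) fun y => by
    rw [div_mul_eq_mul_div, le_div_iff₀' ha]
    exact h y

theorem opNorm_mul_opNorm_le_of_forall (f : E →L[𝕜] F) (g : G →L[𝕜] H) {C : ℝ} (hC : 0 ≤ C)
    (h : ∀ x y, ‖f x‖ * ‖g y‖ ≤ C * ‖x‖ * ‖y‖) : ‖f‖ * ‖g‖ ≤ C := by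
  rw [mul_comm]
  refine f.mul_opNorm_le_of_forall (norm_nonneg _) hC fun x => ?_
  rw [mul_comm]
  exact g.mul_opNorm_le_of_forall (norm_nonneg _) (by positivity) (h x)

end ContinuousLinearMap

namespace Matrix

variable (p : ℝ≥0∞) [Fact (1 ≤ p)] {𝕜 : Type*} [NontriviallyNormedField 𝕜] [CompleteSpace 𝕜]
  {ι κ : Type*} [Fintype ι] [Fintype κ] [DecidableEq ι] [DecidableEq κ]

noncomputable def toLpCLM : Matrix ι ι 𝕜 ≃ₐ[𝕜] (WithLp p (ι → 𝕜) →L[𝕜] WithLp p (ι → 𝕜)) :=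
  (toLpLinAlgEquiv p).trans (Module.End.toContinuousLinearMap _)

theorem toLpCLM_apply (A : Matrix ι ι 𝕜) (x : WithLp p (ι → 𝕜)) :
    toLpCLM p A x = toLp p (A *ᵥ ofLp x) := rfl

theorem toLpCLM_reindex (e : ι ≃ κ) (A : Matrix ι ι 𝕜) :
    toLpCLM p (reindex e e A) =
      (LinearIsometryEquiv.piLpCongrLeft p 𝕜 𝕜 e : WithLp p (ι → 𝕜) →L[𝕜] _).comp
        ((toLpCLM p A).comp
          ((LinearIsometryEquiv.piLpCongrLeft p 𝕜 𝕜 e).symm : WithLp p (κ → 𝕜) →L[𝕜] _)) := by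
  ext x k
  simp only [reindex_apply, toLpCLM_apply, mulVec, dotProduct, submatrix_apply,
    LinearIsometryEquiv.piLpCongrLeft_symm, ContinuousLinearMap.comp_apply,
    ContinuousLinearEquiv.coe_coe, LinearIsometryEquiv.coe_toContinuousLinearEquiv,
    LinearIsometryEquiv.piLpCongrLeft_apply, Equiv.piCongrLeft'_apply, Equiv.symm_symm]
  exact Fintype.sum_equiv e.symm _ _ fun i => by simp

theorem norm_toLpCLM_reindex (e : ι ≃ κ) (A : Matrix ι ι 𝕜) :
    ‖toLpCLM p (reindex e e A)‖ = ‖toLpCLM p A‖ := by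
  rw [toLpCLM_reindex, ContinuousLinearMap.opNorm_linearIsometryEquiv_comp,
    ContinuousLinearMap.opNorm_comp_linearIsometryEquiv]

theorem norm_toLpCLM_one_kronecker_le (N : Matrix κ κ 𝕜) :
    ‖toLpCLM p ((1 : Matrix ι ι 𝕜) ⊗ₖ N)‖ ≤ ‖toLpCLM p N‖ := by
  refine ContinuousLinearMap.opNorm_le_bound _ (norm_nonneg _) fun z => ?_
  let e := LinearIsometryEquiv.piLpCurryProd p 𝕜 ι κ 𝕜
  have hslice : ∀ i, e (toLpCLM p ((1 : Matrix ι ι 𝕜) ⊗ₖ N) z) i = toLpCLM p N (e z i) := by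
    intro i; ext k
    simp [e, toLpCLM_apply, mulVec, dotProduct, Fintype.sum_prod_type, one_apply]
  rw [← e.norm_map, ← e.norm_map z]
  exact PiLp.norm_le_mul_norm_of_forall_norm_le_mul (norm_nonneg _) fun i =>
    hslice i ▸ (toLpCLM p N).le_opNorm _

theorem norm_toLpCLM_kronecker_one_le (M : Matrix ι ι 𝕜) :
    ‖toLpCLM p (M ⊗ₖ (1 : Matrix κ κ 𝕜))‖ ≤ ‖toLpCLM p M‖ := by
  have hswap : M ⊗ₖ (1 : Matrix κ κ 𝕜) = reindex (.prodComm κ ι) (.prodComm κ ι) (1 ⊗ₖ M) := by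
    ext ⟨i, k⟩ ⟨j, l⟩; simp [mul_comm]
  rw [hswap, norm_toLpCLM_reindex]
  exact norm_toLpCLM_one_kronecker_le p M

theorem toLpCLM_kronecker_toLp_mul (M : Matrix ι ι 𝕜) (N : Matrix κ κ 𝕜)
    (x : WithLp p (ι → 𝕜)) (y : WithLp p (κ → 𝕜)) :
    toLpCLM p (M ⊗ₖ N) (toLp p fun ik => x ik.1 * y ik.2) =
      toLp p fun ik => toLpCLM p M x ik.1 * toLpCLM p N y ik.2 := by
  ext ⟨i, k⟩
  simp only [toLpCLM_apply, mulVec, dotProduct, Fintype.sum_prod_type, kroneckerMap_apply,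
    Finset.sum_mul_sum]
  exact Finset.sum_congr rfl fun _ _ => Finset.sum_congr rfl fun _ _ => by ring

theorem norm_toLpCLM_kronecker (M : Matrix ι ι 𝕜) (N : Matrix κ κ 𝕜) :
    ‖toLpCLM p (M ⊗ₖ N)‖ = ‖toLpCLM p M‖ * ‖toLpCLM p N‖ := by
  apply le_antisymm
  · calc ‖toLpCLM p (M ⊗ₖ N)‖
        = ‖toLpCLM p (M ⊗ₖ (1 : Matrix κ κ 𝕜)) * toLpCLM p ((1 : Matrix ι ι 𝕜) ⊗ₖ N)‖ := by
          rw [← map_mul, ← mul_kronecker_mul, mul_one, one_mul]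
      _ ≤ ‖toLpCLM p M‖ * ‖toLpCLM p N‖ :=
          (norm_mul_le _ _).trans (mul_le_mul (norm_toLpCLM_kronecker_one_le p M)
            (norm_toLpCLM_one_kronecker_le p N) (norm_nonneg _) (norm_nonneg _))
  · refine ContinuousLinearMap.opNorm_mul_opNorm_le_of_forall _ _ (norm_nonneg _) fun x y => ?_
    calc ‖toLpCLM p M x‖ * ‖toLpCLM p N y‖
        = ‖toLpCLM p (M ⊗ₖ N) (toLp p fun ik => x ik.1 * y ik.2)‖ := by
          rw [toLpCLM_kronecker_toLp_mul, PiLp.norm_toLp_mul]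
      _ ≤ ‖toLpCLM p (M ⊗ₖ N)‖ * ‖toLp p fun ik : ι × κ => x ik.1 * y ik.2‖ :=
          (toLpCLM p (M ⊗ₖ N)).le_opNorm _
      _ = ‖toLpCLM p (M ⊗ₖ N)‖ * ‖x‖ * ‖y‖ := by rw [PiLp.norm_toLp_mul, mul_assoc]

end Matrix

namespace Filter.Tendsto

variable {f g h : ℝ → ℝ} {a b C : ℝ}

theorem mul_sub_one_div (hf : Tendsto (fun ε => (f ε - 1) / ε) (𝓝[>] 0) (𝓝 a))
    (hg : Tendsto (fun ε => (g ε - 1) / ε) (𝓝[>] 0) (𝓝 b)) :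
    Tendsto (fun ε => (f ε * g ε - 1) / ε) (𝓝[>] 0) (𝓝 (a + b)) := by
  have hε : Tendsto (fun ε : ℝ => ε) (𝓝[>] 0) (𝓝 0) :=
    tendsto_nhdsWithin_of_tendsto_nhds tendsto_id
  have hg₁ : Tendsto g (𝓝[>] 0) (𝓝 1) := by
    have := tendsto_const_nhds (x := (1 : ℝ)).add (hε.mul hg)
    rw [zero_mul, add_zero] at this
    refine this.congr' (eventually_nhdsWithin_of_forall fun ε (hε : 0 < ε) => ?_)
    field_simp
    ring
  have := (hf.mul hg₁).add hg
  rw [mul_one] at this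
  exact this.congr fun ε => by ring

theorem sub_one_div_of_abs_sub_le (hf : Tendsto (fun ε => (f ε - 1) / ε) (𝓝[>] 0) (𝓝 a))
    (hfh : ∀ᶠ ε in 𝓝[>] 0, |h ε - f ε| ≤ C * ε ^ 2) :
    Tendsto (fun ε => (h ε - 1) / ε) (𝓝[>] 0) (𝓝 a) := by
  have herr : Tendsto (fun ε => (h ε - f ε) / ε) (𝓝[>] 0) (𝓝 0) := by
    refine squeeze_zero_norm' (a := fun ε => C * ε) ?_ ?_
    · filter_upwards [hfh, self_mem_nhdsWithin] with ε hε (hε₀ : 0 < ε)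
      rw [Real.norm_eq_abs, abs_div, abs_of_pos hε₀, div_le_iff₀ hε₀]
      linarith
    · have hε : Tendsto (fun ε : ℝ => ε) (𝓝[>] 0) (𝓝 0) :=
        tendsto_nhdsWithin_of_tendsto_nhds tendsto_id
      simpa using hε.const_mul C
  have := hf.add herr
  rw [add_zero] at this
  exact this.congr fun ε => by ring

end Filter.Tendsto

section KroneckerSum

variable (p : ℝ≥0∞) [Fact (1 ≤ p)] {ι κ : Type*} [Fintype ι] [Fintype κ] [DecidableEq ι]
  [DecidableEq κ]

theorem lpOpNorm_eq_norm_toLpCLM (A : Matrix ι ι ℝ) : lpOpNorm p A = ‖toLpCLM p A‖ := rfl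

theorem one_add_smul_kronecker_one_add_smul (ε : ℝ) (A : Matrix ι ι ℝ) (B : Matrix κ κ ℝ) :
    (1 + ε • A) ⊗ₖ (1 + ε • B) = 1 + ε • kroneckerSum A B + ε ^ 2 • A ⊗ₖ B := by
  simp only [add_kronecker, kronecker_add, one_kronecker_one, smul_kronecker, kronecker_smul,
    kroneckerSum, smul_add, smul_smul, sq]
  abel

theorem abs_lpOpNorm_kroneckerSum_sub_mul_le (ε : ℝ) (A : Matrix ι ι ℝ) (B : Matrix κ κ ℝ) :
    |lpOpNorm p (1 + ε • kroneckerSum A B) - lpOpNorm p (1 + ε • A) * lpOpNorm p (1 + ε • B)|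
      ≤ lpOpNorm p (A ⊗ₖ B) * ε ^ 2 := by
  simp only [lpOpNorm_eq_norm_toLpCLM]
  rw [← norm_toLpCLM_kronecker, one_add_smul_kronecker_one_add_smul, map_add _ _ (ε ^ 2 • _),
    map_smul]
  calc _ ≤ _ := abs_norm_sub_norm_le _ _
    _ = _ := by rw [sub_add_cancel_left, norm_neg, norm_smul, Real.norm_of_nonneg (sq_nonneg _),
      mul_comm]

end KroneckerSum

theorem mu_kroneckerSum_general (p : ENNReal) [Fact (1 ≤ p)]
    {n m : ℕ}
    (A : Matrix (Fin n) (Fin n) ℝ) (B : Matrix (Fin m) (Fin m) ℝ)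
    (muA muB muAB : ℝ)
    (hA : Tendsto (fun ε : ℝ => (lpOpNorm p (1 + ε • A) - 1) / ε)
      (nhdsWithin 0 (Set.Ioi 0)) (nhds muA))
    (hB : Tendsto (fun ε : ℝ => (lpOpNorm p (1 + ε • B) - 1) / ε)
      (nhdsWithin 0 (Set.Ioi 0)) (nhds muB))
    (hAB : Tendsto (fun ε : ℝ => (lpOpNorm p (1 + ε • kroneckerSum A B) - 1) / ε)
      (nhdsWithin 0 (Set.Ioi 0)) (nhds muAB)) :
    muAB = muA + muB :=
  tendsto_nhds_unique hAB <| (hA.mul_sub_one_div hB).sub_one_div_of_abs_sub_le <|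
    .of_forall fun ε => abs_lpOpNorm_kroneckerSum_sub_mul_le p ε A B

/-- For matrix measures `μ` induced by `Lᵖ` norms (`p ∈ {1,2,∞}`), the matrix measure
of the Kronecker sum is additive: `μ(A ⊕ B) = μ(A) + μ(B)`.  Here the matrix measure
of `M` is the value `μ` such that `(‖I + εM‖ − 1)/ε → μ` as `ε → 0⁺`. -/
theorem mu_kroneckerSum (p : ENNReal) [Fact (1 ≤ p)]
    (hp : p = 1 ∨ p = 2 ∨ p = ⊤) {n m : ℕ}
    (A : Matrix (Fin n) (Fin n) ℝ) (B : Matrix (Fin m) (Fin m) ℝ)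
    (muA muB muAB : ℝ)
    (hA : Tendsto (fun ε : ℝ => (lpOpNorm p (1 + ε • A) - 1) / ε)
      (nhdsWithin 0 (Set.Ioi 0)) (nhds muA))
    (hB : Tendsto (fun ε : ℝ => (lpOpNorm p (1 + ε • B) - 1) / ε)
      (nhdsWithin 0 (Set.Ioi 0)) (nhds muB))
    (hAB : Tendsto (fun ε : ℝ => (lpOpNorm p (1 + ε • kroneckerSum A B) - 1) / ε)
      (nhdsWithin 0 (Set.Ioi 0)) (nhds muAB)) :
    muAB = muA + muB :=
  mu_kroneckerSum_general p A B muA muB muAB hA hB hAB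
end
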